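/- Penalized Q-values are shifted below unpenalized Q-values at advising actions: for every β ≥ 0, every h ∈ {1,…,H}, every s ∈ S and every a ∈ Ā with a ≠ defer, one has Q*_{h,β}(s,a) ≤ Q*_h(s,a) − β. -/

import Mathlib

open Finset

noncomputable section

variable {S A B : Type*}

/-- Human action distribution `ℙ_h(a|s,a^M)` given machine advice (`none` = defer). -/
def Pact [DecidableEq A] (piH : ℕ → S → A → ℝ) (θ : S → A → ℝ)
    (h : ℕ) (s : S) (aM : Option A) (a : A) : ℝ :=
  match aM with
  | Option.none => piH h s a
  | Option.some b => if a = b then θ s b else (1 - θ s b) * piH h s a / (1 - piH h s b)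

/-- Machine transition kernel `p^M_h(s'|s,a^M)`. -/
def pM [Fintype A] [DecidableEq A] (p : ℕ → S → A → S → ℝ) (piH : ℕ → S → A → ℝ)
    (θ : S → A → ℝ) (h : ℕ) (s : S) (aM : Option A) (s' : S) : ℝ :=
  ∑ a : A, p h s a s' * Pact piH θ h s aM a

/-- Machine reward `r^M_h(s,a^M)`. -/
def rM [Fintype A] [DecidableEq A] (r : ℕ → S → A → ℝ) (piH : ℕ → S → A → ℝ)
    (θ : S → A → ℝ) (h : ℕ) (s : S) (aM : Option A) : ℝ :=
  ∑ a : A, r h s a * Pact piH θ h s aM a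

/-- Indicator of advising (`a^M ≠ defer`). -/
def indAdv : Option A → ℝ := fun aM => match aM with
  | Option.none => 0
  | Option.some _ => 1

/-- The β-penalized machine reward `r^M_{h,β}(s,a) = r^M_h(s,a) − β·1{a ≠ defer}`. -/
def rMpen [Fintype A] [DecidableEq A] (r : ℕ → S → A → ℝ) (piH : ℕ → S → A → ℝ)
    (θ : S → A → ℝ) (β : ℝ) (h : ℕ) (s : S) (aM : Option A) : ℝ :=
  rM r piH θ h s aM - β * indAdv aM

/-- The always-defer policy. -/
def deferPol : ℕ → S → Option A := fun _ _ => Option.none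

/-- Value with `k` remaining steps starting at stage `h`. -/
def Vfuel [Fintype S] (P : ℕ → S → B → S → ℝ) (R : ℕ → S → B → ℝ)
    (pol : ℕ → S → B) : ℕ → ℕ → S → ℝ
  | _, 0, _ => 0
  | h, k + 1, s =>
      R h s (pol h s) + ∑ s' : S, P h s (pol h s) s' * Vfuel P R pol (h + 1) k s'

/-- Value function `V^π_h(s)` of a deterministic Markov policy with horizon `H`:
`V^π_{H+1} = 0` and `V^π_h(s) = R_h(s,π_h(s)) + Σ_{s'} P_h(s'|s,π_h(s)) V^π_{h+1}(s')`. -/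
def Vval [Fintype S] (H : ℕ) (P : ℕ → S → B → S → ℝ) (R : ℕ → S → B → ℝ)
    (pol : ℕ → S → B) (h : ℕ) (s : S) : ℝ :=
  Vfuel P R pol h (H + 1 - h) s

/-- Optimal value function: supremum over deterministic Markov policies. -/
def Vstar [Fintype S] (H : ℕ) (P : ℕ → S → B → S → ℝ) (R : ℕ → S → B → ℝ)
    (h : ℕ) (s : S) : ℝ :=
  ⨆ pol : ℕ → S → B, Vval H P R pol h s

/-- Optimal Q-function `Q*_h(s,b) = R_h(s,b) + Σ_{s'} P_h(s'|s,b) V*_{h+1}(s')`. -/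
def Qstar [Fintype S] (H : ℕ) (P : ℕ → S → B → S → ℝ) (R : ℕ → S → B → ℝ)
    (h : ℕ) (s : S) (b : B) : ℝ :=
  R h s b + ∑ s' : S, P h s b s' * Vstar H P R (h + 1) s'

/-- Q-function of a policy with `k` remaining steps. -/
def Qfuel [Fintype S] (P : ℕ → S → B → S → ℝ) (R : ℕ → S → B → ℝ)
    (pol : ℕ → S → B) : ℕ → ℕ → S → B → ℝ
  | _, 0, _, _ => 0
  | h, k + 1, s, b =>
      R h s b + ∑ s' : S, P h s b s' * Qfuel P R pol (h + 1) k s' (pol (h + 1) s')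

/-- Q-function `Q^π_h(s,b)` of a policy with horizon `H` (`Q^π_{H+1} = 0`). -/
def Qval [Fintype S] (H : ℕ) (P : ℕ → S → B → S → ℝ) (R : ℕ → S → B → ℝ)
    (pol : ℕ → S → B) (h : ℕ) (s : S) (b : B) : ℝ :=
  Qfuel P R pol h (H + 1 - h) s b

end

/-!
Penalizing only lowers rewards (by `β` at advising actions, not at all at `defer`), so for
every policy the penalized value is at most the unpenalized one, and taking suprema the same
holds for the optimal values `V*_{h+1,β} ≤ V*_{h+1}`. At an advising action `a`,
`Q*_{h,β}(s,a)` is `r^M_h(s,a) - β` plus the expected penalized optimal continuation value,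
which is therefore at most `Q*_h(s,a) - β`.
-/

section MDP

variable {S B : Type*} [Fintype S]

def StochasticOn (H : ℕ) (P : ℕ → S → B → S → ℝ) : Prop :=
  ∀ h, 1 ≤ h → h ≤ H → ∀ (s : S) (b : B), (∀ s' : S, 0 ≤ P h s b s') ∧ ∑ s' : S, P h s b s' = 1

lemma Vfuel_le_mul {H : ℕ} {P : ℕ → S → B → S → ℝ} {R : ℕ → S → B → ℝ} {c : ℝ}
    (hP : StochasticOn H P) (hR : ∀ h, 1 ≤ h → h ≤ H → ∀ s b, R h s b ≤ c)
    (pol : ℕ → S → B) :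
    ∀ k h, 1 ≤ h → h + k ≤ H + 1 → ∀ s, Vfuel P R pol h k s ≤ k * c := by
  intro k
  induction k with
  | zero => intro h _ _ s; simp [Vfuel]
  | succ k ih =>
    intro h h1 hk s
    obtain ⟨hnn, hsum⟩ := hP h h1 (by omega) s (pol h s)
    have hnext : ∑ s', P h s (pol h s) s' * Vfuel P R pol (h + 1) k s' ≤ k * c :=
      calc ∑ s', P h s (pol h s) s' * Vfuel P R pol (h + 1) k s'
          ≤ ∑ s', P h s (pol h s) s' * (k * c) :=
            sum_le_sum fun s' _ =>
              mul_le_mul_of_nonneg_left (ih (h + 1) (by omega) (by omega) s') (hnn s')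
        _ = k * c := by rw [← sum_mul, hsum, one_mul]
    have hnow := hR h h1 (by omega) s (pol h s)
    simp only [Vfuel, Nat.cast_succ]
    linarith

lemma Vfuel_mono_reward {H : ℕ} {P : ℕ → S → B → S → ℝ} {R₁ R₂ : ℕ → S → B → ℝ}
    (hP : ∀ h, 1 ≤ h → h ≤ H → ∀ s b s', 0 ≤ P h s b s')
    (hR : ∀ h, 1 ≤ h → h ≤ H → ∀ s b, R₁ h s b ≤ R₂ h s b) (pol : ℕ → S → B) :
    ∀ k h, 1 ≤ h → h + k ≤ H + 1 → ∀ s, Vfuel P R₁ pol h k s ≤ Vfuel P R₂ pol h k s := by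
  intro k
  induction k with
  | zero => intro h _ _ s; simp [Vfuel]
  | succ k ih =>
    intro h h1 hk s
    have hnext : ∑ s', P h s (pol h s) s' * Vfuel P R₁ pol (h + 1) k s'
        ≤ ∑ s', P h s (pol h s) s' * Vfuel P R₂ pol (h + 1) k s' :=
      sum_le_sum fun s' _ => mul_le_mul_of_nonneg_left (ih (h + 1) (by omega) (by omega) s')
        (hP h h1 (by omega) s (pol h s) s')
    have hnow := hR h h1 (by omega) s (pol h s)
    simp only [Vfuel]
    linarith

lemma Vstar_mono_reward [Nonempty B] {H : ℕ} {P : ℕ → S → B → S → ℝ}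
    {R₁ R₂ : ℕ → S → B → ℝ} {c : ℝ} (hP : StochasticOn H P)
    (hR₂ : ∀ h, 1 ≤ h → h ≤ H → ∀ s b, R₂ h s b ≤ c)
    (hR : ∀ h, 1 ≤ h → h ≤ H → ∀ s b, R₁ h s b ≤ R₂ h s b)
    {h : ℕ} (h1 : 1 ≤ h) (hH : h ≤ H + 1) (s : S) : Vstar H P R₁ h s ≤ Vstar H P R₂ h s := by
  -- a real `⨆` that is not bounded above is junk (`0`), hence the bound `c`
  have hbdd : BddAbove (Set.range fun pol => Vval H P R₂ pol h s) :=
    ⟨(H + 1 - h : ℕ) * c, by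
      rintro _ ⟨pol, rfl⟩
      exact Vfuel_le_mul hP hR₂ pol _ h h1 (by omega) s⟩
  refine ciSup_le fun pol => ?_
  calc Vval H P R₁ pol h s ≤ Vval H P R₂ pol h s :=
        Vfuel_mono_reward (fun t ht1 ht2 s b => (hP t ht1 ht2 s b).1) hR pol _ h h1 (by omega) s
    _ ≤ Vstar H P R₂ h s := le_ciSup hbdd pol

lemma Qstar_sub_reward_le [Nonempty B] {H : ℕ} {P : ℕ → S → B → S → ℝ}
    {R₁ R₂ : ℕ → S → B → ℝ} {c : ℝ} (hP : StochasticOn H P)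
    (hR₂ : ∀ h, 1 ≤ h → h ≤ H → ∀ s b, R₂ h s b ≤ c)
    (hR : ∀ h, 1 ≤ h → h ≤ H → ∀ s b, R₁ h s b ≤ R₂ h s b)
    {h : ℕ} (h1 : 1 ≤ h) (hH : h ≤ H) (s : S) (b : B) :
    Qstar H P R₁ h s b - R₁ h s b ≤ Qstar H P R₂ h s b - R₂ h s b := by
  simp only [Qstar, add_sub_cancel_left]
  exact sum_le_sum fun s' _ => mul_le_mul_of_nonneg_left
    (Vstar_mono_reward hP hR₂ hR (by omega) (by omega) s') ((hP h h1 hH s b).1 s')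

end MDP

section HumanMachine

variable {S A : Type*} [DecidableEq A]
  {piH : ℕ → S → A → ℝ} {θ : S → A → ℝ} {h : ℕ} {s : S}

lemma Pact_nonneg (hpi : ∀ a, 0 ≤ piH h s a) (hlt : ∀ a, piH h s a < 1)
    (hθ : ∀ a, 0 ≤ θ s a ∧ θ s a ≤ 1) (aM : Option A) (a : A) :
    0 ≤ Pact piH θ h s aM a := by
  cases aM with
  | none => exact hpi a
  | some b =>
    simp only [Pact]
    split_ifs
    · exact (hθ b).1
    · exact div_nonneg (mul_nonneg (by linarith [(hθ b).2]) (hpi a)) (by linarith [hlt b])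

lemma Pact_sum_eq_one [Fintype A] (hsum : ∑ a, piH h s a = 1) (hlt : ∀ a, piH h s a < 1)
    (aM : Option A) : ∑ a, Pact piH θ h s aM a = 1 := by
  cases aM with
  | none => exact hsum
  | some b =>
    have hb : 1 - piH h s b ≠ 0 := by linarith [hlt b]
    have hrest : ∑ a ∈ univ.erase b, Pact piH θ h s (some b) a
        = (1 - θ s b) * (∑ a ∈ univ.erase b, piH h s a) / (1 - piH h s b) := by
      rw [mul_sum, sum_div]
      exact sum_congr rfl fun a ha => by simp [Pact, ne_of_mem_erase ha]
    rw [← add_sum_erase univ _ (mem_univ b), hrest, sum_erase_eq_sub (mem_univ b), hsum,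
      mul_div_assoc, div_self hb]
    simp [Pact]

end HumanMachine

section MachineMDP

variable {S A : Type*} [Fintype A] [DecidableEq A] {H : ℕ}
  {p : ℕ → S → A → S → ℝ} {piH : ℕ → S → A → ℝ} {θ : S → A → ℝ}

lemma stochasticOn_pM [Fintype S] (hp : StochasticOn H p)
    (hpiH : ∀ h, 1 ≤ h → h ≤ H → ∀ s, (∀ a, 0 ≤ piH h s a) ∧ ∑ a, piH h s a = 1)
    (hpiHlt : ∀ h, 1 ≤ h → h ≤ H → ∀ s a, piH h s a < 1)
    (hθ : ∀ s a, 0 ≤ θ s a ∧ θ s a ≤ 1) : StochasticOn H (pM p piH θ) := by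
  intro h h1 hH s aM
  have hPact := Pact_nonneg (hpiH h h1 hH s).1 (hpiHlt h h1 hH s) (hθ s) aM
  refine ⟨fun s' => sum_nonneg fun a _ => mul_nonneg ((hp h h1 hH s a).1 s') (hPact a), ?_⟩
  simp only [pM]
  rw [sum_comm]
  simp_rw [← sum_mul, fun a => (hp h h1 hH s a).2, one_mul]
  exact Pact_sum_eq_one (hpiH h h1 hH s).2 (hpiHlt h h1 hH s) aM

lemma rM_le_one {r : ℕ → S → A → ℝ} (hr : ∀ h, 1 ≤ h → h ≤ H → ∀ s a, r h s a ≤ 1)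
    (hpiH : ∀ h, 1 ≤ h → h ≤ H → ∀ s, (∀ a, 0 ≤ piH h s a) ∧ ∑ a, piH h s a = 1)
    (hpiHlt : ∀ h, 1 ≤ h → h ≤ H → ∀ s a, piH h s a < 1)
    (hθ : ∀ s a, 0 ≤ θ s a ∧ θ s a ≤ 1) :
    ∀ h, 1 ≤ h → h ≤ H → ∀ s aM, rM r piH θ h s aM ≤ 1 := by
  intro h h1 hH s aM
  calc rM r piH θ h s aM ≤ ∑ a, 1 * Pact piH θ h s aM a :=
        sum_le_sum fun a _ => mul_le_mul_of_nonneg_right (hr h h1 hH s a)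
          (Pact_nonneg (hpiH h h1 hH s).1 (hpiHlt h h1 hH s) (hθ s) aM a)
    _ = 1 := by
        simpa only [one_mul] using Pact_sum_eq_one (hpiH h h1 hH s).2 (hpiHlt h h1 hH s) aM

lemma rMpen_le_rM {r : ℕ → S → A → ℝ} {β : ℝ} (hβ : 0 ≤ β) (h : ℕ) (s : S) (aM : Option A) :
    rMpen r piH θ β h s aM ≤ rM r piH θ h s aM := by
  cases aM <;> simp [rMpen, indAdv, hβ]

end MachineMDP

theorem penalized_Q_shift_general
    {S A : Type*} [Fintype S] [Fintype A] [DecidableEq A]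
    (H : ℕ)
    (p : ℕ → S → A → S → ℝ) (r : ℕ → S → A → ℝ) (piH : ℕ → S → A → ℝ)
    (hp : ∀ h, 1 ≤ h → h ≤ H → ∀ (s : S) (a : A),
      (∀ s' : S, 0 ≤ p h s a s') ∧ ∑ s' : S, p h s a s' = 1)
    (hr : ∀ h, 1 ≤ h → h ≤ H → ∀ (s : S) (a : A), 0 ≤ r h s a ∧ r h s a ≤ 1)
    (hpiH : ∀ h, 1 ≤ h → h ≤ H → ∀ s : S,
      (∀ a : A, 0 ≤ piH h s a) ∧ ∑ a : A, piH h s a = 1)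
    (hpiHlt : ∀ h, 1 ≤ h → h ≤ H → ∀ (s : S) (a : A), piH h s a < 1)
    (θ : S → A → ℝ) (hθ : ∀ (s : S) (a : A), 0 ≤ θ s a ∧ θ s a ≤ 1)
    (β : ℝ) (hβ : 0 ≤ β) :
    ∀ h, 1 ≤ h → h ≤ H → ∀ (s : S) (a : Option A), a ≠ Option.none →
      Qstar H (pM p piH θ) (rMpen r piH θ β) h s a
        ≤ Qstar H (pM p piH θ) (rM r piH θ) h s a - β := by
  intro h h1 hH s a ha
  obtain ⟨b, rfl⟩ := Option.ne_none_iff_exists'.mp ha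
  have hcont := Qstar_sub_reward_le (stochasticOn_pM hp hpiH hpiHlt hθ)
    (rM_le_one (fun t ht1 ht2 s a => (hr t ht1 ht2 s a).2) hpiH hpiHlt hθ)
    (fun t _ _ => rMpen_le_rM hβ t) h1 hH s (some b)
  have hpen : rMpen r piH θ β h s (some b) = rM r piH θ h s (some b) - β := by
    simp [rMpen, indAdv]
  linarith

/-- penalized Q-values are shifted below unpenalized Q-values at
advising actions. -/
theorem penalized_Q_shift
    {S A : Type*} [Fintype S] [Fintype A] [Nonempty S] [Nonempty A] [DecidableEq A]
    (H : ℕ) (hH : 1 ≤ H)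
    (p : ℕ → S → A → S → ℝ) (r : ℕ → S → A → ℝ) (piH : ℕ → S → A → ℝ)
    (hp : ∀ h, 1 ≤ h → h ≤ H → ∀ (s : S) (a : A),
      (∀ s' : S, 0 ≤ p h s a s') ∧ ∑ s' : S, p h s a s' = 1)
    (hr : ∀ h, 1 ≤ h → h ≤ H → ∀ (s : S) (a : A), 0 ≤ r h s a ∧ r h s a ≤ 1)
    (hpiH : ∀ h, 1 ≤ h → h ≤ H → ∀ s : S,
      (∀ a : A, 0 ≤ piH h s a) ∧ ∑ a : A, piH h s a = 1)
    (hpiHlt : ∀ h, 1 ≤ h → h ≤ H → ∀ (s : S) (a : A), piH h s a < 1)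
    (θ : S → A → ℝ) (hθ : ∀ (s : S) (a : A), 0 ≤ θ s a ∧ θ s a ≤ 1)
    (β : ℝ) (hβ : 0 ≤ β) :
    ∀ h, 1 ≤ h → h ≤ H → ∀ (s : S) (a : Option A), a ≠ Option.none →
      Qstar H (pM p piH θ) (rMpen r piH θ β) h s a
        ≤ Qstar H (pM p piH θ) (rM r piH θ) h s a - β :=
  penalized_Q_shift_general H p r piH hp hr hpiH hpiHlt θ hθ β hβ
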